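/- For every n ≥ 3: ‖s_n − f_n‖_S ≤ √2 · χ^{−1} · √(C² + χ) · C⁴ · ‖p_{n−3}‖₂. -/

import Mathlib

/-!
Put `w = s_n - 𝒢 p_{n-1}`; both terms are monic of degree `n`, so `w ∈ W_{n-1}`. Sobolev
orthogonality of `s_n`, together with `Δ 𝒢 p_{n-1} = p_{n-1} ⊥ Δ w`, gives
`‖w‖_S² = -⟨𝒢 p_{n-1}, w⟩₂`. Now `w - 𝒢 Δ w` is a constant, and `𝒢` maps it into `W_1 ⊥ p_{n-1}`,
so by symmetry of `𝒢` this equals `-⟨p_{n-1}, 𝒢² Δ w⟩₂ ≤ C² ‖p_{n-1}‖₂ ‖Δ w‖₂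
≤ C² ‖p_{n-1}‖₂ ‖w‖_S / √χ`. Finally `‖p_{n-1}‖₂ ≤ ‖𝒢² p_{n-3}‖₂ ≤ C² ‖p_{n-3}‖₂`, as `p_{n-1}`
minimises the norm among monic polynomials of degree `n-1`; and `1/√χ ≤ √2 χ⁻¹ √(C² + χ)`.
-/

open Filter RealInnerProductSpace

variable {H : Type*} [NormedAddCommGroup H] [InnerProductSpace ℝ H]

/-- `Wlt P n` is the span of `P 0, …, P (n-1)`; thus `Wlt P 0 = ⊥ = W_{-1}` and
`Wlt P (n+1)` is the space `W_n = span{P_0, …, P_n}`. -/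
def Wlt (P : ℕ → H) (n : ℕ) : Submodule ℝ H := Submodule.span ℝ (P '' Set.Iio n)

/-- `Wtot P` is the space `W = ⋃ₙ Wₙ` of all polynomials. -/
def Wtot (P : ℕ → H) : Submodule ℝ H := Submodule.span ℝ (Set.range P)

/-- The Sobolev inner product `⟨f, g⟩_S = ⟨f, g⟩₂ + χ⟨Δf, Δg⟩₂`. -/
noncomputable def innerS (Δ : H →ₗ[ℝ] H) (χ : ℝ) (f g : H) : ℝ :=
  ⟪ f, g ⟫ + χ * ⟪ Δ f, Δ g ⟫

/-- The Sobolev norm `‖f‖_S = √(‖f‖₂² + χ‖Δf‖₂²)`. -/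
noncomputable def normS (Δ : H →ₗ[ℝ] H) (χ : ℝ) (f : H) : ℝ :=
  Real.sqrt (‖f‖ ^ 2 + χ * ‖Δ f‖ ^ 2)

section Degree

variable {P : ℕ → H}

lemma Wlt_mono {a b : ℕ} (h : a ≤ b) : Wlt P a ≤ Wlt P b :=
  Submodule.span_mono (Set.image_mono (Set.Iio_subset_Iio h))

lemma mem_Wlt_of_lt {i n : ℕ} (h : i < n) : P i ∈ Wlt P n :=
  Submodule.subset_span ⟨i, h, rfl⟩

lemma Wlt_le_Wtot (n : ℕ) : Wlt P n ≤ Wtot P :=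
  Submodule.span_mono (Set.image_subset_range P _)

lemma mem_Wlt_succ_iff {n : ℕ} {u : H} :
    u ∈ Wlt P (n + 1) ↔ ∃ c : ℝ, ∃ v ∈ Wlt P n, u = c • P n + v := by
  have hIio : Set.Iio (n + 1) = insert n (Set.Iio n) := by
    ext i
    simp only [Set.mem_Iio, Set.mem_insert_iff]
    omega
  rw [Wlt, hIio, Set.image_insert_eq, Submodule.mem_span_insert, Wlt]

variable {Δ : H →ₗ[ℝ] H}

lemma map_mem_Wlt (hΔ0 : Δ (P 0) = 0) (hΔsucc : ∀ n, Δ (P (n + 1)) = P n) {m : ℕ} {u : H}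
    (hu : u ∈ Wlt P (m + 1)) : Δ u ∈ Wlt P m := by
  refine (Submodule.span_le.mpr ?_ : Wlt P (m + 1) ≤ (Wlt P m).comap Δ) hu
  rintro _ ⟨i, hi, rfl⟩
  cases i with
  | zero => simp [hΔ0]
  | succ j => simpa [hΔsucc] using mem_Wlt_of_lt (P := P) (Nat.lt_of_succ_lt_succ hi)

lemma mem_Wlt_succ_of_map_mem (hP : LinearIndependent ℝ P) (hΔ0 : Δ (P 0) = 0)
    (hΔsucc : ∀ n, Δ (P (n + 1)) = P n) {m k : ℕ} {u : H} (hu : u ∈ Wlt P k)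
    (hΔu : Δ u ∈ Wlt P m) : u ∈ Wlt P (m + 1) := by
  induction k generalizing u with
  | zero => exact Wlt_mono (Nat.zero_le _) hu
  | succ k ih =>
    rcases le_or_gt k m with hk | hk
    · exact Wlt_mono (by omega) hu
    obtain ⟨j, rfl⟩ : ∃ j, k = j + 1 := ⟨k - 1, by omega⟩
    obtain ⟨c, v, hv, rfl⟩ := mem_Wlt_succ_iff.mp hu
    have hΔv : Δ v ∈ Wlt P j := map_mem_Wlt hΔ0 hΔsucc hv
    have hc : c • P j ∈ Wlt P j := by
      have := (Wlt P j).sub_mem (Wlt_mono (by omega) hΔu) hΔv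
      simpa [hΔsucc] using this
    obtain rfl : c = 0 := by
      by_contra hc0
      exact hP.notMem_span_image (s := Set.Iio j) (by simp)
        ((Submodule.smul_mem_iff _ hc0).mp hc)
    rw [zero_smul, zero_add] at hΔu ⊢
    exact ih hv hΔu

end Degree

def IsMonicOfDegree (P : ℕ → H) (n : ℕ) (q : H) : Prop := q - P n ∈ Wlt P n

namespace IsMonicOfDegree

variable {P : ℕ → H} {n : ℕ} {q r : H}

lemma mem_Wlt (hq : IsMonicOfDegree P n q) : q ∈ Wlt P (n + 1) := by
  simpa using (Wlt P (n + 1)).add_mem (Wlt_mono n.le_succ hq) (mem_Wlt_of_lt n.lt_succ_self)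

lemma sub_mem (hq : IsMonicOfDegree P n q) (hr : IsMonicOfDegree P n r) : q - r ∈ Wlt P n := by
  simpa using (Wlt P n).sub_mem hq hr

lemma map_green {Δ G : H →ₗ[ℝ] H} (hP : LinearIndependent ℝ P) (hΔ0 : Δ (P 0) = 0)
    (hΔsucc : ∀ n, Δ (P (n + 1)) = P n) (hGinv : ∀ u ∈ Wtot P, Δ (G u) = u)
    (hGmap : ∀ n, ∀ u ∈ Wlt P (n + 1), G u ∈ Wlt P (n + 2)) (hq : IsMonicOfDegree P n q) :
    IsMonicOfDegree P (n + 1) (G q) := by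
  refine mem_Wlt_succ_of_map_mem hP hΔ0 hΔsucc
    ((Wlt P (n + 2)).sub_mem (hGmap n q hq.mem_Wlt) (mem_Wlt_of_lt (by omega))) ?_
  rwa [map_sub, hGinv q (Wlt_le_Wtot _ hq.mem_Wlt), hΔsucc]

end IsMonicOfDegree

lemma norm_le_norm_of_inner_sub_eq_zero {p q : H} (h : ⟪p, q - p⟫ = 0) : ‖p‖ ≤ ‖q‖ := by
  have hpyth := norm_add_sq_eq_norm_sq_add_norm_sq_real h
  rw [add_sub_cancel] at hpyth
  exact (sq_le_sq₀ (norm_nonneg _) (norm_nonneg _)).mp (by nlinarith [sq_nonneg ‖q - p‖])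

section Green

variable {P : ℕ → H} {G : H →ₗ[ℝ] H} {C : ℝ}

lemma norm_green_green_le (hGmap : ∀ n, ∀ u ∈ Wlt P (n + 1), G u ∈ Wlt P (n + 2)) (hC : 0 ≤ C)
    (hGbound : ∀ u ∈ Wtot P, ‖G u‖ ≤ C * ‖u‖) {n : ℕ} {u : H} (hu : u ∈ Wlt P (n + 1)) :
    ‖G (G u)‖ ≤ C ^ 2 * ‖u‖ :=
  calc ‖G (G u)‖ ≤ C * ‖G u‖ := hGbound _ (Wlt_le_Wtot _ (hGmap n u hu))
    _ ≤ C * (C * ‖u‖) := mul_le_mul_of_nonneg_left (hGbound u (Wlt_le_Wtot _ hu)) hC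
    _ = C ^ 2 * ‖u‖ := by ring

/-- Being orthogonal to lower degrees, `p` has least norm among the monic polynomials of its
degree, one of which is `G (G q)`. -/
lemma norm_orthogonal_le {Δ : H →ₗ[ℝ] H} (hP : LinearIndependent ℝ P) (hΔ0 : Δ (P 0) = 0)
    (hΔsucc : ∀ n, Δ (P (n + 1)) = P n) (hGinv : ∀ u ∈ Wtot P, Δ (G u) = u)
    (hGmap : ∀ n, ∀ u ∈ Wlt P (n + 1), G u ∈ Wlt P (n + 2)) (hC : 0 ≤ C)
    (hGbound : ∀ u ∈ Wtot P, ‖G u‖ ≤ C * ‖u‖) {n : ℕ} {p q : H}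
    (hp : IsMonicOfDegree P (n + 2) p) (hportho : ∀ w ∈ Wlt P (n + 2), ⟪p, w⟫ = 0)
    (hq : IsMonicOfDegree P n q) : ‖p‖ ≤ C ^ 2 * ‖q‖ := by
  have hGGq : IsMonicOfDegree P (n + 2) (G (G q)) :=
    (hq.map_green hP hΔ0 hΔsucc hGinv hGmap).map_green hP hΔ0 hΔsucc hGinv hGmap
  calc ‖p‖ ≤ ‖G (G q)‖ := norm_le_norm_of_inner_sub_eq_zero (hportho _ (hGGq.sub_mem hp))
    _ ≤ C ^ 2 * ‖q‖ := norm_green_green_le hGmap hC hGbound hq.mem_Wlt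

end Green

section Sobolev

variable {P : ℕ → H} {Δ G : H →ₗ[ℝ] H} {C χ : ℝ}

lemma normS_sq (hχ : 0 ≤ χ) (w : H) : normS Δ χ w ^ 2 = innerS Δ χ w w := by
  rw [normS, Real.sq_sqrt (by positivity), innerS, real_inner_self_eq_norm_sq,
    real_inner_self_eq_norm_sq]

lemma sqrt_mul_norm_le_normS (hχ : 0 ≤ χ) (w : H) : √χ * ‖Δ w‖ ≤ normS Δ χ w := by
  rw [normS, Real.le_sqrt (by positivity) (by positivity), mul_pow, Real.sq_sqrt hχ]
  exact le_add_of_nonneg_left (sq_nonneg _)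

lemma normS_sub_green_sq (hP : LinearIndependent ℝ P) (hΔ0 : Δ (P 0) = 0)
    (hΔsucc : ∀ n, Δ (P (n + 1)) = P n) (hGinv : ∀ u ∈ Wtot P, Δ (G u) = u)
    (hGmap : ∀ n, ∀ u ∈ Wlt P (n + 1), G u ∈ Wlt P (n + 2)) (hχ : 0 ≤ χ) {n : ℕ} {p s : H}
    (hp : IsMonicOfDegree P n p) (hportho : ∀ w ∈ Wlt P n, ⟪p, w⟫ = 0)
    (hs : IsMonicOfDegree P (n + 1) s) (hsortho : ∀ w ∈ Wlt P (n + 1), innerS Δ χ s w = 0) :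
    normS Δ χ (s - G p) ^ 2 = -⟪G p, s - G p⟫ := by
  have hw : s - G p ∈ Wlt P (n + 1) := hs.sub_mem (hp.map_green hP hΔ0 hΔsucc hGinv hGmap)
  have hΔGp : Δ (G p) = p := hGinv p (Wlt_le_Wtot _ hp.mem_Wlt)
  have hpΔw : ⟪p, Δ (s - G p)⟫ = 0 := hportho _ (map_mem_Wlt hΔ0 hΔsucc hw)
  have hsplit : innerS Δ χ (s - G p) (s - G p) =
      innerS Δ χ s (s - G p) - innerS Δ χ (G p) (s - G p) := by
    simp only [innerS, map_sub, inner_sub_left]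
    ring
  rw [normS_sq hχ, hsplit, hsortho _ hw, innerS, hΔGp, hpΔw]
  ring

/-- `w - G (Δ w)` lies in the kernel of `Δ`, i.e. is a constant, and `G` maps constants into
degree `≤ 1`, where they are orthogonal to `p`. -/
lemma inner_green_eq_inner_green_green_map (hP : LinearIndependent ℝ P) (hΔ0 : Δ (P 0) = 0)
    (hΔsucc : ∀ n, Δ (P (n + 1)) = P n)
    (hGsym : ∀ u ∈ Wtot P, ∀ v ∈ Wtot P, ⟪G u, v⟫ = ⟪u, G v⟫)
    (hGinv : ∀ u ∈ Wtot P, Δ (G u) = u)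
    (hGmap : ∀ n, ∀ u ∈ Wlt P (n + 1), G u ∈ Wlt P (n + 2)) {n : ℕ} {p w : H}
    (hp : p ∈ Wtot P) (hportho : ∀ v ∈ Wlt P (n + 2), ⟪p, v⟫ = 0) (hw : w ∈ Wlt P (n + 3)) :
    ⟪G p, w⟫ = ⟪p, G (G (Δ w))⟫ := by
  have hΔw : Δ w ∈ Wlt P (n + 2) := map_mem_Wlt hΔ0 hΔsucc hw
  have hGΔw : G (Δ w) ∈ Wlt P (n + 3) := hGmap _ _ hΔw
  have hconst : w - G (Δ w) ∈ Wlt P 1 := by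
    refine mem_Wlt_succ_of_map_mem hP hΔ0 hΔsucc ((Wlt P (n + 3)).sub_mem hw hGΔw) ?_
    rw [map_sub, hGinv _ (Wlt_le_Wtot _ hΔw), sub_self]
    exact zero_mem _
  have hGconst : ⟪p, G (w - G (Δ w))⟫ = 0 :=
    hportho _ (Wlt_mono (by omega) (hGmap 0 _ hconst))
  calc ⟪G p, w⟫ = ⟪G p, G (Δ w)⟫ + ⟪G p, w - G (Δ w)⟫ := by
        rw [← inner_add_right, add_sub_cancel]
    _ = ⟪p, G (G (Δ w))⟫ := by
        rw [hGsym _ hp _ (Wlt_le_Wtot _ hGΔw), hGsym _ hp _ (Wlt_le_Wtot _ hconst), hGconst,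
          add_zero]

lemma normS_sub_green_sq_le (hP : LinearIndependent ℝ P) (hΔ0 : Δ (P 0) = 0)
    (hΔsucc : ∀ n, Δ (P (n + 1)) = P n)
    (hGsym : ∀ u ∈ Wtot P, ∀ v ∈ Wtot P, ⟪G u, v⟫ = ⟪u, G v⟫)
    (hGinv : ∀ u ∈ Wtot P, Δ (G u) = u)
    (hGmap : ∀ n, ∀ u ∈ Wlt P (n + 1), G u ∈ Wlt P (n + 2)) (hC : 0 ≤ C)
    (hGbound : ∀ u ∈ Wtot P, ‖G u‖ ≤ C * ‖u‖) (hχ : 0 ≤ χ) {n : ℕ} {p s : H}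
    (hp : IsMonicOfDegree P (n + 2) p) (hportho : ∀ w ∈ Wlt P (n + 2), ⟪p, w⟫ = 0)
    (hs : IsMonicOfDegree P (n + 3) s) (hsortho : ∀ w ∈ Wlt P (n + 3), innerS Δ χ s w = 0) :
    normS Δ χ (s - G p) ^ 2 ≤ C ^ 2 * ‖p‖ * ‖Δ (s - G p)‖ := by
  have hw : s - G p ∈ Wlt P (n + 3) := hs.sub_mem (hp.map_green hP hΔ0 hΔsucc hGinv hGmap)
  rw [normS_sub_green_sq hP hΔ0 hΔsucc hGinv hGmap hχ hp hportho hs hsortho,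
    inner_green_eq_inner_green_green_map hP hΔ0 hΔsucc hGsym hGinv hGmap
      (Wlt_le_Wtot _ hp.mem_Wlt) hportho hw]
  calc -⟪p, G (G (Δ (s - G p)))⟫ ≤ ‖p‖ * ‖G (G (Δ (s - G p)))‖ :=
        (neg_le_abs _).trans (abs_real_inner_le_norm _ _)
    _ ≤ ‖p‖ * (C ^ 2 * ‖Δ (s - G p)‖) :=
        mul_le_mul_of_nonneg_left
          (norm_green_green_le hGmap hC hGbound (map_mem_Wlt hΔ0 hΔsucc hw)) (norm_nonneg _)
    _ = C ^ 2 * ‖p‖ * ‖Δ (s - G p)‖ := by ring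

end Sobolev

lemma le_div_of_sq_le_mul {N a b x : ℝ} (hN : 0 ≤ N) (ha : 0 < a) (hb : 0 ≤ b)
    (hNx : N ^ 2 ≤ b * x) (hxN : a * x ≤ N) : N ≤ b / a := by
  rw [le_div_iff₀ ha]
  rcases hN.eq_or_lt with rfl | hN
  · simpa using hb
  · nlinarith

lemma inv_sqrt_le (C : ℝ) {χ : ℝ} (hχ : 0 ≤ χ) : (√χ)⁻¹ ≤ √2 * χ⁻¹ * √(C ^ 2 + χ) := by
  have hsqrt : √χ ≤ √2 * √(C ^ 2 + χ) := by
    rw [← Real.sqrt_mul zero_le_two]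
    exact Real.sqrt_le_sqrt (by nlinarith [sq_nonneg C])
  rw [← Real.sqrt_div_self, div_eq_mul_inv, mul_right_comm]
  exact mul_le_mul_of_nonneg_right hsqrt (inv_nonneg.mpr hχ)

/-- For `n ≥ 3`: `‖s_n − f_n‖_S ≤ √2 χ⁻¹ √(C² + χ) C⁴ ‖p_{n−3}‖₂`. -/
theorem statement12
    (P : ℕ → H) (hP : LinearIndependent ℝ P)
    (Δ G : H →ₗ[ℝ] H)
    (hΔ0 : Δ (P 0) = 0) (hΔsucc : ∀ n, Δ (P (n + 1)) = P n)
    (hGsym : ∀ u ∈ Wtot P, ∀ v ∈ Wtot P, ⟪ G u, v ⟫ = ⟪ u, G v ⟫)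
    (hGinv : ∀ u ∈ Wtot P, Δ (G u) = u)
    (hGmap : ∀ n, ∀ u ∈ Wlt P (n + 1), G u ∈ Wlt P (n + 2))
    (C : ℝ) (hC : 0 < C)
    (hGbound : ∀ u ∈ Wtot P, ‖G u‖ ≤ C * ‖u‖)
    (χ : ℝ) (hχ : 0 < χ)
    (p : ℕ → H)
    (hpmonic : ∀ n, p n - P n ∈ Wlt P n)
    (hportho : ∀ n, ∀ w ∈ Wlt P n, ⟪ p n, w ⟫ = 0)
    (s : ℕ → H)
    (hsmonic : ∀ n, s n - P n ∈ Wlt P n)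
    (hsortho : ∀ n, ∀ w ∈ Wlt P n, innerS Δ χ (s n) w = 0)
    : ∀ n, 3 ≤ n →
      normS Δ χ (s n - G (p (n - 1))) ≤
        Real.sqrt 2 * χ⁻¹ * Real.sqrt (C ^ 2 + χ) * C ^ 4 * ‖p (n - 3)‖ := by
  intro n hn
  obtain ⟨m, rfl⟩ : ∃ m, n = m + 3 := ⟨n - 3, by omega⟩
  rw [show m + 3 - 1 = m + 2 by omega, show m + 3 - 3 = m by omega]
  have hp : ∀ k, IsMonicOfDegree P k (p k) := hpmonic
  have hN := normS_sub_green_sq_le hP hΔ0 hΔsucc hGsym hGinv hGmap hC.le hGbound hχ.le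
    (hp (m + 2)) (hportho _) (hsmonic _) (hsortho _)
  calc normS Δ χ (s (m + 3) - G (p (m + 2))) ≤ C ^ 2 * ‖p (m + 2)‖ / √χ :=
        le_div_of_sq_le_mul (Real.sqrt_nonneg _) (Real.sqrt_pos.mpr hχ) (by positivity) hN
          (sqrt_mul_norm_le_normS hχ.le _)
    _ ≤ C ^ 2 * (C ^ 2 * ‖p m‖) / √χ := by
        gcongr
        exact norm_orthogonal_le hP hΔ0 hΔsucc hGinv hGmap hC.le hGbound (hp _) (hportho _)
          (hp _)
    _ = C ^ 4 * ‖p m‖ * (√χ)⁻¹ := by ring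
    _ ≤ C ^ 4 * ‖p m‖ * (√2 * χ⁻¹ * √(C ^ 2 + χ)) := by
        gcongr
        exact inv_sqrt_le C hχ.le
    _ = √2 * χ⁻¹ * √(C ^ 2 + χ) * C ^ 4 * ‖p m‖ := by ring
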